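/- arXiv:2208.10691 — 5 statements merged into one kernel-verified Lean document; each statement's English description precedes it below -/
import Mathlib

section
/- If A is an n×n real matrix with smallest singular value σ_min(A) > 1, then for every b ∈ ℝⁿ the absolute value equation Ax - |x| = b (where |x| denotes the componentwise absolute value) has a unique solution x ∈ ℝⁿ. -/
open Matrix
open scoped BigOperators

/-- Euclidean norm of a vector in ℝⁿ. -/
noncomputable def evnorm {n : ℕ} (x : Fin n → ℝ) : ℝ := Real.sqrt (∑ i, x i ^ 2)

/-- Componentwise absolute value. -/
def vabs {n : ℕ} (x : Fin n → ℝ) : Fin n → ℝ := fun i => |x i|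

/-- Spectral norm: sup of ‖Ax‖ over unit vectors x. -/
noncomputable def specNorm {n : ℕ} (A : Matrix (Fin n) (Fin n) ℝ) : ℝ :=
  sSup {c : ℝ | ∃ x : Fin n → ℝ, evnorm x = 1 ∧ c = evnorm (A *ᵥ x)}

/-- Smallest singular value: inf of ‖Ax‖ over unit vectors x. -/
noncomputable def sigmaMin {n : ℕ} (A : Matrix (Fin n) (Fin n) ℝ) : ℝ :=
  sInf {c : ℝ | ∃ x : Fin n → ℝ, evnorm x = 1 ∧ c = evnorm (A *ᵥ x)}

lemma evnorm_nonneg {n : ℕ} (x : Fin n → ℝ) : 0 ≤ evnorm x := Real.sqrt_nonneg _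

lemma evnorm_eq_norm {n : ℕ} (x : EuclideanSpace ℝ (Fin n)) : evnorm x = ‖x‖ := by
  rw [EuclideanSpace.norm_eq]
  unfold evnorm
  congr 1
  refine Finset.sum_congr rfl fun i _ => ?_
  rw [Real.norm_eq_abs, sq_abs]

lemma evnorm_zero_iff {n : ℕ} (x : Fin n → ℝ) : evnorm x = 0 ↔ x = 0 := by
  rw [show evnorm x = ‖WithLp.toLp 2 x‖ from evnorm_eq_norm (WithLp.toLp 2 x), norm_eq_zero,
    WithLp.toLp_eq_zero]

lemma evnorm_smul {n : ℕ} (c : ℝ) (x : Fin n → ℝ) : evnorm (c • x) = |c| * evnorm x := by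
  unfold evnorm
  simp_rw [Pi.smul_apply, smul_eq_mul, mul_pow]
  rw [← Finset.mul_sum, Real.sqrt_mul (sq_nonneg c), Real.sqrt_sq_eq_abs]

lemma evnorm_vabs_sub {n : ℕ} (x y : Fin n → ℝ) :
    evnorm (vabs x - vabs y) ≤ evnorm (x - y) := by
  unfold evnorm
  apply Real.sqrt_le_sqrt
  apply Finset.sum_le_sum
  intro i _
  have h1 : |(vabs x - vabs y) i| ≤ |(x - y) i| := by
    simp only [vabs, Pi.sub_apply]
    exact abs_abs_sub_abs_le_abs_sub _ _
  calc ((vabs x - vabs y) i) ^ 2 = |(vabs x - vabs y) i| ^ 2 := (sq_abs _).symm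
    _ ≤ |(x - y) i| ^ 2 := by
        exact pow_le_pow_left₀ (abs_nonneg _) h1 2
    _ = ((x - y) i) ^ 2 := sq_abs _

lemma sigmaMin_mul_le {n : ℕ} (A : Matrix (Fin n) (Fin n) ℝ) (x : Fin n → ℝ) :
    sigmaMin A * evnorm x ≤ evnorm (A *ᵥ x) := by
  rcases eq_or_ne x 0 with rfl | hx
  · simp [Matrix.mulVec_zero, (evnorm_zero_iff (0 : Fin n → ℝ)).2 rfl]
  · set r := evnorm x with hr_def
    have hr : 0 < r := lt_of_le_of_ne (evnorm_nonneg x)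
      (fun h => hx ((evnorm_zero_iff x).1 h.symm))
    have hu : evnorm (r⁻¹ • x) = 1 := by
      rw [evnorm_smul, abs_of_pos (inv_pos.2 hr)]
      field_simp
      exact hr_def.symm
    have hbdd : BddBelow {c : ℝ | ∃ x : Fin n → ℝ, evnorm x = 1 ∧ c = evnorm (A *ᵥ x)} :=
      ⟨0, by rintro c ⟨y, -, rfl⟩; exact evnorm_nonneg _⟩
    have hle : sigmaMin A ≤ evnorm (A *ᵥ (r⁻¹ • x)) :=
      csInf_le hbdd ⟨r⁻¹ • x, hu, rfl⟩
    rw [Matrix.mulVec_smul, evnorm_smul, abs_of_pos (inv_pos.2 hr)] at hle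
    have := mul_le_mul_of_nonneg_right hle hr.le
    rw [mul_comm r⁻¹, mul_assoc, inv_mul_cancel₀ hr.ne', mul_one] at this
    exact this

theorem stmt0 {n : ℕ} (A : Matrix (Fin n) (Fin n) ℝ) (hA : 1 < sigmaMin A) :
    ∀ b : Fin n → ℝ, ∃! x : Fin n → ℝ, A *ᵥ x - vabs x = b := by
  intro b
  have hσ0 : 0 < sigmaMin A := lt_trans one_pos hA
  -- injectivity of mulVec
  have hinj : Function.Injective (A.mulVecLin) := by
    rw [injective_iff_map_eq_zero]
    intro x hx
    have h := sigmaMin_mul_le A x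
    rw [show A *ᵥ x = 0 from hx, (evnorm_zero_iff (0 : Fin n → ℝ)).2 rfl] at h
    have : evnorm x ≤ 0 := by
      by_contra hcon
      push_neg at hcon
      nlinarith
    exact (evnorm_zero_iff x).1 (le_antisymm this (evnorm_nonneg x))
  have hsurj : Function.Surjective (A.mulVecLin) :=
    (LinearMap.injective_iff_surjective).1 hinj
  let e : (Fin n → ℝ) ≃ₗ[ℝ] (Fin n → ℝ) :=
    LinearEquiv.ofBijective A.mulVecLin ⟨hinj, hsurj⟩
  have he : ∀ v : Fin n → ℝ, A *ᵥ (e.symm v) = v := fun v => e.apply_symm_apply v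
  -- key contraction estimate
  have hkey : ∀ v : Fin n → ℝ, evnorm (e.symm v) ≤ (sigmaMin A)⁻¹ * evnorm v := by
    intro v
    have h := sigmaMin_mul_le A (e.symm v)
    rw [he v] at h
    rw [inv_mul_eq_div, le_div_iff₀ hσ0, mul_comm]
    exact h
  -- the contraction map on Euclidean space
  set T : EuclideanSpace ℝ (Fin n) → EuclideanSpace ℝ (Fin n) :=
    fun x => WithLp.toLp 2 (e.symm (vabs x + b)) with hT
  have hdist : ∀ x y : EuclideanSpace ℝ (Fin n),
      dist (T x) (T y) ≤ (sigmaMin A)⁻¹ * dist x y := by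
    intro x y
    have hsub : T x - T y = (e.symm (vabs x - vabs y) : Fin n → ℝ) := by
      show e.symm (vabs x + b) - e.symm (vabs y + b) = e.symm (vabs x - vabs y)
      rw [← map_sub]
      congr 1
      abel
    rw [dist_eq_norm, dist_eq_norm, ← evnorm_eq_norm, ← evnorm_eq_norm, WithLp.ofLp_sub, hsub]
    calc evnorm (e.symm (vabs x - vabs y))
        ≤ (sigmaMin A)⁻¹ * evnorm (vabs x - vabs y) := hkey _
      _ ≤ (sigmaMin A)⁻¹ * evnorm ((x : Fin n → ℝ) - (y : Fin n → ℝ)) := by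
          exact mul_le_mul_of_nonneg_left (evnorm_vabs_sub _ _) (inv_pos.2 hσ0).le
  set K : NNReal := ⟨(sigmaMin A)⁻¹, (inv_pos.2 hσ0).le⟩ with hK
  have hKlt : K < 1 := by
    rw [← NNReal.coe_lt_coe]
    exact inv_lt_one_of_one_lt₀ hA
  have hcontr : ContractingWith K T :=
    ⟨hKlt, LipschitzWith.of_dist_le_mul fun x y => hdist x y⟩
  obtain ⟨x, hx⟩ := hcontr.exists_fixedPoint (0 : EuclideanSpace ℝ (Fin n))
    (by rw [edist_dist]; exact ENNReal.ofReal_ne_top)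
  set x0 : Fin n → ℝ := x.ofLp with hx0
  have hfix' : e.symm (vabs x0 + b) = x0 := congrArg WithLp.ofLp hx.1
  have hsol : A *ᵥ x0 - vabs x0 = b := by
    have h2 : vabs x0 + b = A *ᵥ x0 := by
      have h3 := congrArg e hfix'
      rw [e.apply_symm_apply] at h3
      exact h3
    rw [← h2]
    abel
  refine ⟨x0, hsol, ?_⟩
  intro y hy
  have hdiff : A *ᵥ (y - x0) = vabs y - vabs x0 := by
    rw [Matrix.mulVec_sub]
    have h1 : A *ᵥ y = vabs y + b := by rw [← hy]; abel
    have h2 : A *ᵥ x0 = vabs x0 + b := by rw [← hsol]; abel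
    rw [h1, h2]
    abel
  have h := sigmaMin_mul_le A (y - x0)
  rw [hdiff] at h
  have h2 : evnorm (vabs y - vabs x0) ≤ evnorm (y - x0) := evnorm_vabs_sub y x0
  have h3 : evnorm (y - x0) = 0 := by
    by_contra hcon
    have hpos : 0 < evnorm (y - x0) :=
      lt_of_le_of_ne (evnorm_nonneg _) (Ne.symm hcon)
    nlinarith
  exact sub_eq_zero.mp ((evnorm_zero_iff _).1 h3)
end

section
/- A vector x ∈ ℝⁿ solves the absolute value equation Ax - |x| - b = 0 if and only if Q(x) := Ax + x - b ≥ 0 (componentwise), F(x) := Ax - x - b ≥ 0 (componentwise), and ⟨Q(x), F(x)⟩ = 0. -/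
open Matrix
open scoped BigOperators

theorem stmt6 {n : ℕ} (A : Matrix (Fin n) (Fin n) ℝ) (b : Fin n → ℝ) (x : Fin n → ℝ) :
    A *ᵥ x - vabs x - b = 0 ↔
      ((∀ i, 0 ≤ (A *ᵥ x + x - b) i) ∧ (∀ i, 0 ≤ (A *ᵥ x - x - b) i) ∧
        (A *ᵥ x + x - b) ⬝ᵥ (A *ᵥ x - x - b) = 0) := by
  set y := A *ᵥ x with hy
  constructor
  · intro h
    have h' : ∀ i, y i - |x i| - b i = 0 := fun i => congrFun h i
    refine ⟨fun i => ?_, fun i => ?_, ?_⟩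
    · have := h' i
      simp only [Pi.add_apply, Pi.sub_apply]
      have : y i - b i = |x i| := by linarith
      nlinarith [abs_nonneg (x i), neg_abs_le (x i), le_abs_self (x i)]
    · have := h' i
      simp only [Pi.sub_apply]
      nlinarith [le_abs_self (x i)]
    · unfold dotProduct
      apply Finset.sum_eq_zero
      intro i _
      have := h' i
      simp only [Pi.add_apply, Pi.sub_apply]
      have hxi : y i - b i = |x i| := by linarith
      have : (y i + x i - b i) * (y i - x i - b i) = |x i| ^ 2 - x i ^ 2 := by
        rw [show y i + x i - b i = (y i - b i) + x i by ring,
            show y i - x i - b i = (y i - b i) - x i by ring, hxi]; ring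
      rw [this, sq_abs]; ring
  · rintro ⟨hQ, hF, hdot⟩
    funext i
    have hzero : ∀ j ∈ Finset.univ, ((y + x - b) j) * ((y - x - b) j) = 0 := by
      apply (Finset.sum_eq_zero_iff_of_nonneg ?_).mp hdot
      intro j _
      exact mul_nonneg (hQ j) (hF j)
    have hz := hzero i (Finset.mem_univ i)
    simp only [Pi.add_apply, Pi.sub_apply] at hz hQ hF
    have hQi := hQ i
    have hFi := hF i
    have hsq : (y i - b i) ^ 2 = x i ^ 2 := by nlinarith
    have : y i - b i = |x i| := by
      rcases abs_cases (x i) with ⟨h1, h2⟩ | ⟨h1, h2⟩ <;> rw [h1] <;> nlinarith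
    simp only [Pi.sub_apply, Pi.zero_apply, vabs]
    linarith
end

section
/- Suppose 1 is not an eigenvalue of A. If u* ∈ ℝⁿ satisfies the linear complementarity problem u* ≥ 0, M u* + q ≥ 0, ⟨u*, M u* + q⟩ = 0 with M = (A+I)(A-I)⁻¹ and q = [(A+I)(A-I)⁻¹ - I] b, then x* = (A - I)⁻¹(u* + b) solves the absolute value equation Ax - |x| - b = 0. -/
open Matrix
open scoped BigOperators

theorem stmt7 {n : ℕ} (A : Matrix (Fin n) (Fin n) ℝ) (b u : Fin n → ℝ)
    (hA : IsUnit (A - 1).det)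
    (hu : ∀ i, 0 ≤ u i)
    (hMq : ∀ i, 0 ≤ (((((A + 1) * (A - 1)⁻¹) *ᵥ u) + (((A + 1) * (A - 1)⁻¹ - 1) *ᵥ b) : Fin n → ℝ)) i)
    (hcomp : u ⬝ᵥ (((((A + 1) * (A - 1)⁻¹) *ᵥ u) + (((A + 1) * (A - 1)⁻¹ - 1) *ᵥ b) : Fin n → ℝ)) = 0) :
    A *ᵥ ((A - 1)⁻¹ *ᵥ (u + b)) - vabs ((A - 1)⁻¹ *ᵥ (u + b)) - b = 0 := by
  set x : Fin n → ℝ := (A - 1)⁻¹ *ᵥ (u + b) with hx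
  have hAx : (A - 1) *ᵥ x = u + b := by
    rw [hx, mulVec_mulVec, mul_nonsing_inv _ hA, one_mulVec]
  have hAx' : A *ᵥ x = x + (u + b) := by
    have h : (A - 1) *ᵥ x = A *ᵥ x - x := by rw [sub_mulVec, one_mulVec]
    rw [h] at hAx
    rw [← hAx]; abel
  have hv : (((A + 1) * (A - 1)⁻¹) *ᵥ u) + (((A + 1) * (A - 1)⁻¹ - 1) *ᵥ b) = x + x + u := by
    have h1 : (((A + 1) * (A - 1)⁻¹) *ᵥ u) + (((A + 1) * (A - 1)⁻¹ - 1) *ᵥ b)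
        = ((A + 1) * (A - 1)⁻¹) *ᵥ (u + b) - b := by
      rw [mulVec_add, sub_mulVec, one_mulVec]; abel
    rw [h1, ← mulVec_mulVec, ← hx, add_mulVec, one_mulVec, hAx']
    abel
  rw [hv] at hMq hcomp
  have hzero : ∀ i, u i * (x i + x i + u i) = 0 := by
    have hsum := hcomp
    rw [dotProduct] at hsum
    intro i
    have := (Finset.sum_eq_zero_iff_of_nonneg (fun j _ =>
      mul_nonneg (hu j) (hMq j))).mp hsum i (Finset.mem_univ i)
    simpa using this
  funext i
  have hvi : 0 ≤ x i + x i + u i := hMq i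
  have habs : |x i| = x i + u i := by
    rcases mul_eq_zero.mp (hzero i) with h | h
    · rw [h, add_zero]
      exact abs_of_nonneg (by linarith [hvi, h])
    · have hxu : u i = -(x i) - x i := by linarith
      have hxle : x i ≤ 0 := by nlinarith [hu i]
      rw [abs_of_nonpos hxle]; linarith
  simp only [Pi.sub_apply, Pi.zero_apply, hAx']
  show (x i + (u i + b i)) - vabs x i - b i = 0
  rw [vabs, habs]; ring
end

section
/- Let V: ℝ → ℝ be a nonnegative continuously differentiable function of t satisfying V'(t) ≤ -α V(t)^{k₁} - β V(t)^{k₂} for all t ≥ 0 with V(t) > 0, where α, β > 0, 0 < k₁ < 1, k₂ > 1. Then V(t) = 0 for all t ≥ T_max, where T_max = 1/(α(1-k₁)) + 1/(β(k₂-1)). -/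
open Matrix
open scoped BigOperators

lemma key_deriv (V V' : ℝ → ℝ) (p K x : ℝ)
    (hd : HasDerivAt V (V' x) x) (hVx : V x ≠ 0) :
    HasDerivAt (fun t => V t ^ p + K * t) (V' x * (p * V x ^ (p-1)) + K) x := by
  have h1 := hd.rpow_const (p := p) (Or.inl hVx)
  have h2 : HasDerivAt (fun t : ℝ => K * t) (K * 1) x := (hasDerivAt_id x).const_mul K
  have h3 : HasDerivAt (fun t => V t ^ p + K * t) (V' x * p * V x ^ (p - 1) + K * 1) x :=
    h1.add h2
  simpa [mul_assoc, mul_one] using h3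

section

variable (V V' : ℝ → ℝ) (a b p K : ℝ) (ha : 0 ≤ a)
    (hd : ∀ t, 0 ≤ t → HasDerivAt V (V' t) t)
    (hpos : ∀ t ∈ Set.Icc a b, 0 < V t)

include ha hd hpos

lemma key_cont : ContinuousOn (fun t => V t ^ p + K * t) (Set.Icc a b) := by
  have hVc : ContinuousOn V (Set.Icc a b) := fun x hx =>
    (hd x (le_trans ha hx.1)).continuousAt.continuousWithinAt
  exact (hVc.rpow_const fun x hx => Or.inl (hpos x hx).ne').add
    (continuousOn_const.mul continuousOn_id)

lemma key_dd : ∀ x ∈ Set.Ioo a b,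
    HasDerivAt (fun t => V t ^ p + K * t) (V' x * (p * V x ^ (p-1)) + K) x := fun x hx =>
  key_deriv V V' p K x (hd x (le_trans ha hx.1.le)) (hpos x (Set.Ioo_subset_Icc_self hx)).ne'

lemma key_anti (hK : ∀ t ∈ Set.Ioo a b, V' t * (p * V t ^ (p-1)) + K ≤ 0) :
    AntitoneOn (fun t => V t ^ p + K * t) (Set.Icc a b) := by
  have hdd := key_dd V V' a b p K ha hd hpos
  apply antitoneOn_of_deriv_nonpos (convex_Icc a b)
    (key_cont V V' a b p K ha hd hpos) <;> rw [interior_Icc]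
  · exact fun x hx => ((hdd x hx).differentiableAt).differentiableWithinAt
  · intro x hx; rw [(hdd x hx).deriv]; exact hK x hx

lemma key_mono (hK : ∀ t ∈ Set.Ioo a b, 0 ≤ V' t * (p * V t ^ (p-1)) + K) :
    MonotoneOn (fun t => V t ^ p + K * t) (Set.Icc a b) := by
  have hdd := key_dd V V' a b p K ha hd hpos
  apply monotoneOn_of_deriv_nonneg (convex_Icc a b)
    (key_cont V V' a b p K ha hd hpos) <;> rw [interior_Icc]
  · exact fun x hx => ((hdd x hx).differentiableAt).differentiableWithinAt
  · intro x hx; rw [(hdd x hx).deriv]; exact hK x hx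

end

theorem stmt8 (V V' : ℝ → ℝ) (α β k₁ k₂ : ℝ)
    (hα : 0 < α) (hβ : 0 < β) (hk₁ : 0 < k₁) (hk₁' : k₁ < 1) (hk₂ : 1 < k₂)
    (hVnonneg : ∀ t : ℝ, 0 ≤ V t)
    (hderiv : ∀ t : ℝ, 0 ≤ t → HasDerivAt V (V' t) t)
    (hmono : AntitoneOn V (Set.Ici (0 : ℝ)))
    (hineq : ∀ t : ℝ, 0 ≤ t → 0 < V t → V' t ≤ -α * V t ^ k₁ - β * V t ^ k₂) :
    ∀ t : ℝ, 1 / (α * (1 - k₁)) + 1 / (β * (k₂ - 1)) ≤ t → V t = 0 := by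
  intro t ht
  set T₂ : ℝ := 1 / (α * (1 - k₁)) with hT₂def
  set T₁ : ℝ := 1 / (β * (k₂ - 1)) with hT₁def
  have h1k₁ : 0 < 1 - k₁ := by linarith
  have hk₂1 : 0 < k₂ - 1 := by linarith
  have hT₂ : 0 < T₂ := by positivity
  have hT₁ : 0 < T₁ := by positivity
  have ht0 : 0 ≤ t := by linarith
  by_contra hne
  have hVt : 0 < V t := (hVnonneg t).lt_of_ne (Ne.symm hne)
  have hposall : ∀ s ∈ Set.Icc (0:ℝ) t, 0 < V s := fun s hs =>
    lt_of_lt_of_le hVt (hmono hs.1 ht0 hs.2)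
  -- Step 1: V T₁ ≤ 1
  have hstep1 : V T₁ ≤ 1 := by
    by_contra h1
    push_neg at h1
    have hT₁t : T₁ ≤ t := by linarith
    have hpos1 : ∀ s ∈ Set.Icc (0:ℝ) T₁, 0 < V s := fun s hs =>
      hposall s ⟨hs.1, le_trans hs.2 hT₁t⟩
    have hbig : ∀ s ∈ Set.Icc (0:ℝ) T₁, 1 < V s := fun s hs =>
      lt_of_lt_of_le h1 (hmono hs.1 (le_trans hs.1 hs.2) hs.2)
    have hmonoW := key_mono V V' 0 T₁ (1 - k₂) (-(β * (k₂ - 1))) le_rfl hderiv hpos1 ?_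
    · have hineq1 := hmonoW (Set.left_mem_Icc.2 hT₁.le) (Set.right_mem_Icc.2 hT₁.le) hT₁.le
      simp only [mul_zero, add_zero] at hineq1
      have hKT : β * (k₂ - 1) * T₁ = 1 := by
        rw [hT₁def]; field_simp
      have hV0 : (0:ℝ) < V 0 ^ (1 - k₂) :=
        Real.rpow_pos_of_pos (hpos1 0 (Set.left_mem_Icc.2 hT₁.le)) _
      have hlt1 : V T₁ ^ (1 - k₂) < 1 :=
        Real.rpow_lt_one_of_one_lt_of_neg h1 (by linarith)
      nlinarith
    · intro s hs
      have hs0 : (0:ℝ) ≤ s := hs.1.le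
      have hv0 : 0 < V s := hpos1 s (Set.Ioo_subset_Icc_self hs)
      have hV' : V' s ≤ -β * V s ^ k₂ := by
        have h2 := hineq s hs0 hv0
        have h3 : 0 < α * V s ^ k₁ := mul_pos hα (Real.rpow_pos_of_pos hv0 _)
        linarith
      have hc : (1 - k₂) * V s ^ ((1 - k₂) - 1) < 0 :=
        mul_neg_of_neg_of_pos (by linarith) (Real.rpow_pos_of_pos hv0 _)
      have hmul := mul_le_mul_of_nonpos_right hV' hc.le
      have hprod : V s ^ k₂ * V s ^ ((1 - k₂) - 1) = 1 := by
        rw [← Real.rpow_add hv0]; norm_num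
      have key : -β * V s ^ k₂ * ((1 - k₂) * V s ^ ((1 - k₂) - 1)) = β * (k₂ - 1) := by
        linear_combination (-β * (1 - k₂)) * hprod
      linarith
  -- Step 2
  have hT12t : T₁ + T₂ ≤ t := by linarith
  have hpos2 : ∀ s ∈ Set.Icc T₁ (T₁ + T₂), 0 < V s := fun s hs =>
    hposall s ⟨le_trans hT₁.le hs.1, le_trans hs.2 hT12t⟩
  have hanti := key_anti V V' T₁ (T₁ + T₂) (1 - k₁) (α * (1 - k₁)) hT₁.le hderiv hpos2 ?_
  · have hineq2 := hanti (Set.left_mem_Icc.2 (by linarith)) (Set.right_mem_Icc.2 (by linarith))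
      (by linarith)
    have hKT : α * (1 - k₁) * T₂ = 1 := by
      rw [hT₂def]; field_simp
    have hle1 : V T₁ ^ (1 - k₁) ≤ 1 :=
      Real.rpow_le_one (hVnonneg T₁) hstep1 h1k₁.le
    have hp2 : 0 < V (T₁ + T₂) ^ (1 - k₁) :=
      Real.rpow_pos_of_pos (hpos2 _ (Set.right_mem_Icc.2 (by linarith))) _
    simp only at hineq2
    nlinarith
  · intro s hs
    have hs0 : (0:ℝ) ≤ s := le_trans hT₁.le hs.1.le
    have hv0 : 0 < V s := hpos2 s (Set.Ioo_subset_Icc_self hs)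
    have hV' : V' s ≤ -α * V s ^ k₁ := by
      have h2 := hineq s hs0 hv0
      have h3 : 0 < β * V s ^ k₂ := mul_pos hβ (Real.rpow_pos_of_pos hv0 _)
      linarith
    have hc : 0 < (1 - k₁) * V s ^ ((1 - k₁) - 1) :=
      mul_pos (by linarith) (Real.rpow_pos_of_pos hv0 _)
    have hmul := mul_le_mul_of_nonneg_right hV' hc.le
    have hprod : V s ^ k₁ * V s ^ ((1 - k₁) - 1) = 1 := by
      rw [← Real.rpow_add hv0]; norm_num
    have key : -α * V s ^ k₁ * ((1 - k₁) * V s ^ ((1 - k₁) - 1)) = -(α * (1 - k₁)) := by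
      linear_combination (-α * (1 - k₁)) * hprod
    linarith
end

section
/- Suppose a, b > 0, p ∈ (0,1), q > 1, and V: [0,∞) → [0,∞) is differentiable with V(0) = V₀ > 0 and V'(t) ≤ -a V(t)^p whenever V(t) ∈ (0,1] and V'(t) ≤ -b V(t)^q whenever V(t) ≥ 1. Then V(T) = 0 for some T ≤ 1/(b(q-1)) + 1/(a(1-p)). -/
open Matrix
open scoped BigOperators

private lemma mono_aux (g g' : ℝ → ℝ) {s e : ℝ} (hse : s ≤ e)
    (hd : ∀ t ∈ Set.Icc s e, HasDerivAt g (g' t) t)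
    (hpos : ∀ t ∈ Set.Ioo s e, 0 ≤ g' t) : g s ≤ g e := by
  have hcont : ContinuousOn g (Set.Icc s e) :=
    fun t ht => (hd t ht).continuousAt.continuousWithinAt
  have hdiff : DifferentiableOn ℝ g (interior (Set.Icc s e)) := by
    intro t ht
    exact (hd t (interior_subset ht)).differentiableAt.differentiableWithinAt
  have hder : ∀ t ∈ interior (Set.Icc s e), 0 ≤ deriv g t := by
    intro t ht
    rw [interior_Icc] at ht
    rw [(hd t (Set.Ioo_subset_Icc_self ht)).deriv]
    exact hpos t ht
  exact monotoneOn_of_deriv_nonneg (convex_Icc s e) hcont hdiff hder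
    (Set.left_mem_Icc.mpr hse) (Set.right_mem_Icc.mpr hse) hse

private lemma anti_aux (g g' : ℝ → ℝ) {s e : ℝ} (hse : s ≤ e)
    (hd : ∀ t ∈ Set.Icc s e, HasDerivAt g (g' t) t)
    (hneg : ∀ t ∈ Set.Ioo s e, g' t ≤ 0) : g e ≤ g s := by
  have h := mono_aux (fun t => -g t) (fun t => -g' t) hse
    (fun t ht => (hd t ht).neg) (fun t ht => neg_nonneg.mpr (hneg t ht))
  simp only [neg_le_neg_iff] at h
  exact h

theorem stmt14 (V V' : ℝ → ℝ) (a b p q V₀ : ℝ)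
    (ha : 0 < a) (hb : 0 < b) (hp : 0 < p) (hp' : p < 1) (hq : 1 < q)
    (hVnonneg : ∀ t : ℝ, 0 ≤ t → 0 ≤ V t)
    (hV0 : V 0 = V₀) (hV₀pos : 0 < V₀)
    (hcont : ContinuousOn V (Set.Ici (0 : ℝ)))
    (hmono : AntitoneOn V (Set.Ici (0 : ℝ)))
    (hderiv : ∀ t : ℝ, 0 ≤ t → HasDerivAt V (V' t) t)
    (h1 : ∀ t : ℝ, 0 ≤ t → 0 < V t → V t ≤ 1 → V' t ≤ -a * V t ^ p)
    (h2 : ∀ t : ℝ, 0 ≤ t → 1 ≤ V t → V' t ≤ -b * V t ^ q) :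
    ∃ T : ℝ, 0 ≤ T ∧ T ≤ 1 / (b * (q - 1)) + 1 / (a * (1 - p)) ∧ V T = 0 := by
  have hbq : 0 < b * (q - 1) := by nlinarith
  have hap : 0 < a * (1 - p) := by nlinarith
  have hT1pos : 0 < 1 / (b * (q - 1)) := by positivity
  have hT2pos : 0 < 1 / (a * (1 - p)) := by positivity
  -- Step 1: there is t1 ∈ [0, T1] with V t1 ≤ 1.
  have step1 : ∃ t1 ∈ Set.Icc (0 : ℝ) (1 / (b * (q - 1))), V t1 ≤ 1 := by
    by_contra hcon
    push_neg at hcon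
    have hd : ∀ t ∈ Set.Icc (0 : ℝ) (1 / (b * (q - 1))),
        HasDerivAt (fun t => V t ^ (1 - q) - b * (q - 1) * t)
          (V' t * (1 - q) * V t ^ (1 - q - 1) - b * (q - 1) * 1) t := by
      intro t ht
      have hVt : (1 : ℝ) < V t := hcon t ht
      exact ((hderiv t ht.1).rpow_const (Or.inl (by linarith))).sub
        ((hasDerivAt_id t).const_mul (b * (q - 1)))
    have hpos : ∀ t ∈ Set.Ioo (0 : ℝ) (1 / (b * (q - 1))),
        0 ≤ V' t * (1 - q) * V t ^ (1 - q - 1) - b * (q - 1) * 1 := by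
      intro t ht
      have ht0 : (0 : ℝ) ≤ t := le_of_lt ht.1
      have hVt : (1 : ℝ) < V t := hcon t ⟨ht0, le_of_lt ht.2⟩
      have hVtpos : 0 < V t := by linarith
      have hd2 : V' t ≤ -b * V t ^ q := h2 t ht0 (le_of_lt hVt)
      have key : b * (q - 1) * V t ^ q ≤ V' t * (1 - q) := by nlinarith
      have hmul := mul_le_mul_of_nonneg_right key
        (Real.rpow_nonneg (le_of_lt hVtpos) (1 - q - 1))
      have hone : V t ^ q * V t ^ (1 - q - 1) = 1 := by
        rw [← Real.rpow_add hVtpos]; norm_num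
      have hfin : b * (q - 1) ≤ V' t * (1 - q) * V t ^ (1 - q - 1) := by
        calc b * (q - 1) = b * (q - 1) * (V t ^ q * V t ^ (1 - q - 1)) := by rw [hone]; ring
          _ = b * (q - 1) * V t ^ q * V t ^ (1 - q - 1) := by ring
          _ ≤ V' t * (1 - q) * V t ^ (1 - q - 1) := hmul
      linarith
    have hmono' := mono_aux _ _ (le_of_lt hT1pos) hd hpos
    simp only [hV0, mul_zero, sub_zero] at hmono'
    have hgT1eq : b * (q - 1) * (1 / (b * (q - 1))) = 1 := by rw [mul_one_div_cancel (ne_of_gt hbq)]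
    have hVT1 : (1 : ℝ) < V (1 / (b * (q - 1))) :=
      hcon _ ⟨le_of_lt hT1pos, le_refl _⟩
    have hlt : V (1 / (b * (q - 1))) ^ (1 - q) < 1 := by
      have h := Real.rpow_lt_rpow_of_exponent_lt hVT1 (show (1 : ℝ) - q < 0 by linarith)
      rwa [Real.rpow_zero] at h
    have hgt : 0 < V₀ ^ (1 - q) := Real.rpow_pos_of_pos hV₀pos _
    rw [hgT1eq] at hmono'
    linarith
  obtain ⟨t1, ht1mem, hVt1le⟩ := step1
  have ht1nonneg : 0 ≤ t1 := ht1mem.1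
  have hVt1nonneg : 0 ≤ V t1 := hVnonneg t1 ht1nonneg
  rcases eq_or_lt_of_le hVt1nonneg with hVt1zero | hVt1pos
  · exact ⟨t1, ht1nonneg, le_trans ht1mem.2 (by linarith), hVt1zero.symm⟩
  -- Step 2
  set T2' : ℝ := V t1 ^ (1 - p) / (a * (1 - p)) with hT2'def
  have hVt1rpow : 0 < V t1 ^ (1 - p) := Real.rpow_pos_of_pos hVt1pos _
  have hT2'pos : 0 < T2' := by positivity
  have hT2'le : T2' ≤ 1 / (a * (1 - p)) := by
    have h1le : V t1 ^ (1 - p) ≤ 1 :=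
      Real.rpow_le_one hVt1nonneg hVt1le (by linarith)
    rw [hT2'def]
    gcongr
  have step2 : ∃ t ∈ Set.Icc t1 (t1 + T2'), V t = 0 := by
    by_contra hcon
    push_neg at hcon
    have hVpos : ∀ t ∈ Set.Icc t1 (t1 + T2'), 0 < V t := fun t ht =>
      lt_of_le_of_ne (hVnonneg t (le_trans ht1nonneg ht.1)) (Ne.symm (hcon t ht))
    have hse : t1 ≤ t1 + T2' := by linarith
    have hd : ∀ t ∈ Set.Icc t1 (t1 + T2'),
        HasDerivAt (fun t => V t ^ (1 - p) + a * (1 - p) * t)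
          (V' t * (1 - p) * V t ^ (1 - p - 1) + a * (1 - p) * 1) t := by
      intro t ht
      exact ((hderiv t (le_trans ht1nonneg ht.1)).rpow_const
        (Or.inl (ne_of_gt (hVpos t ht)))).add
        ((hasDerivAt_id t).const_mul (a * (1 - p)))
    have hneg : ∀ t ∈ Set.Ioo t1 (t1 + T2'),
        V' t * (1 - p) * V t ^ (1 - p - 1) + a * (1 - p) * 1 ≤ 0 := by
      intro t ht
      have htmem : t ∈ Set.Icc t1 (t1 + T2') := Set.Ioo_subset_Icc_self ht
      have ht0 : (0 : ℝ) ≤ t := le_trans ht1nonneg htmem.1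
      have hVtpos : 0 < V t := hVpos t htmem
      have hVtle : V t ≤ 1 :=
        le_trans (hmono (Set.mem_Ici.mpr ht1nonneg) (Set.mem_Ici.mpr ht0) htmem.1) hVt1le
      have hd1 : V' t ≤ -a * V t ^ p := h1 t ht0 hVtpos hVtle
      have key : V' t * (1 - p) ≤ -(a * (1 - p)) * V t ^ p := by nlinarith
      have hmul := mul_le_mul_of_nonneg_right key
        (Real.rpow_nonneg (le_of_lt hVtpos) (1 - p - 1))
      have hone : V t ^ p * V t ^ (1 - p - 1) = 1 := by
        rw [← Real.rpow_add hVtpos]; norm_num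
      have hfin : V' t * (1 - p) * V t ^ (1 - p - 1) ≤ -(a * (1 - p)) := by
        calc V' t * (1 - p) * V t ^ (1 - p - 1)
            ≤ -(a * (1 - p)) * V t ^ p * V t ^ (1 - p - 1) := hmul
          _ = -(a * (1 - p)) * (V t ^ p * V t ^ (1 - p - 1)) := by ring
          _ = -(a * (1 - p)) := by rw [hone]; ring
      linarith
    have hanti := anti_aux _ _ hse hd hneg
    have hexp : a * (1 - p) * (t1 + T2') = a * (1 - p) * t1 + V t1 ^ (1 - p) := by
      rw [mul_add, hT2'def]
      field_simp
      exact div_self (by linarith)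
    have hVend : 0 < V (t1 + T2') ^ (1 - p) :=
      Real.rpow_pos_of_pos (hVpos (t1 + T2') ⟨hse, le_refl _⟩) _
    rw [hexp] at hanti
    linarith
  obtain ⟨T, hTmem, hVT⟩ := step2
  refine ⟨T, le_trans ht1nonneg hTmem.1, ?_, hVT⟩
  have h1' := hTmem.2
  have h2' := ht1mem.2
  linarith
end
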